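/- arXiv:1404.4064 — 2 statements merged into one kernel-verified Lean document; each statement's English description precedes it below -/
import Mathlib

section
/- Let M = (S,L) be a binomial B(n+1)-configuration and let N = (Z,G) be a B(n)-configuration regularly contained in M (i.e., N is a subspace of M on point set Z ⊆ S). Then X = S∖Z has exactly n points, any two points of X are collinear in M via a line not in G, and these lines make X into a complete K_n-graph freely contained in M whose complement is N. -/
open Finset

/-- A partial Steiner triple system: a finite incidence structure given by its
set of lines (3-element subsets of the point set) such that two distinct
points lie on at most one common line. -/
structure PSTS (S : Type) where
  lines : Finset (Finset S)
  card3 : ∀ L ∈ lines, L.card = 3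
  unique : ∀ L₁ ∈ lines, ∀ L₂ ∈ lines, ∀ a b : S, a ≠ b →
    a ∈ L₁ → b ∈ L₁ → a ∈ L₂ → b ∈ L₂ → L₁ = L₂

/-- The rank of a point: the number of lines through it. -/
def pointRank {S : Type} [DecidableEq S] (M : PSTS S) (p : S) : ℕ :=
  (M.lines.filter (fun L => p ∈ L)).card

/-- A binomial B(m)-configuration: C(m,2) points, each of rank m-2, and C(m,3) lines. -/
def IsBinomial {S : Type} [Fintype S] [DecidableEq S] (M : PSTS S) (m : ℕ) : Prop :=
  Fintype.card S = Nat.choose m 2 ∧ M.lines.card = Nat.choose m 3 ∧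
    ∀ p : S, pointRank M p = m - 2

/-- `L` is a side of the complete graph on `X`: a line of `M` meeting `X` in
exactly two points (the extension of an edge of `K_X`). -/
def IsSide {S : Type} [DecidableEq S] (M : PSTS S) (X L : Finset S) : Prop :=
  L ∈ M.lines ∧ (L ∩ X).card = 2

instance {S : Type} [DecidableEq S] (M : PSTS S) (X L : Finset S) :
    Decidable (IsSide M X L) := by
  unfold IsSide; infer_instance

/-- The complete graph on the vertex set `X` is freely contained in `M`:
every edge of `K_X` extends to a (necessarily unique) line of `M` which meets
`X` in exactly two points (hence distinct edges extend to distinct lines), and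
two distinct sides never meet outside `X`. -/
def FreelyContains {S : Type} [DecidableEq S] (M : PSTS S) (X : Finset S) : Prop :=
  (∀ a ∈ X, ∀ b ∈ X, a ≠ b → ∃ L ∈ M.lines, a ∈ L ∧ b ∈ L ∧ (L ∩ X).card = 2) ∧
  (∀ L₁ L₂ : Finset S, IsSide M X L₁ → IsSide M X L₂ → L₁ ≠ L₂ →
    ∀ p, p ∈ L₁ → p ∈ L₂ → p ∈ X)

/-- `(Z,G)` is a B(m)-configuration regularly contained in `M` (a subspace):
the lines of `G` are lines of `M` lying in `Z`, every line of `M` meeting `Z`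
in at least two points belongs to `G`, and `(Z,G)` has the binomial B(m) parameters. -/
def RegularBinomialSub {S : Type} [DecidableEq S] (M : PSTS S)
    (Z : Finset S) (G : Finset (Finset S)) (m : ℕ) : Prop :=
  G ⊆ M.lines ∧ (∀ L ∈ G, L ⊆ Z) ∧
  (∀ L ∈ M.lines, 2 ≤ (L ∩ Z).card → L ∈ G) ∧
  Z.card = Nat.choose m 2 ∧ G.card = Nat.choose m 3 ∧
  ∀ p ∈ Z, (G.filter (fun L => p ∈ L)).card = m - 2

/-- The lines of the combinatorial Grassmannian G(Y,2): triples of 2-subsets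
of `Y` contained in a common 3-subset. -/
def GrasLines (Y : Type) [Fintype Y] [DecidableEq Y] :
    Finset (Finset {e : Finset Y // e.card = 2}) :=
  (Finset.univ.filter (fun f : Finset Y => f.card = 3)).image
    (fun f => Finset.univ.filter (fun e : {e : Finset Y // e.card = 2} => e.val ⊆ f))

/-- `M` freely contains exactly `m` complete `K_j`-graphs. -/
def ExactlyKGraphs {S : Type} [DecidableEq S] (M : PSTS S) (j m : ℕ) : Prop :=
  ∃ f : Fin m → Finset S, Function.Injective f ∧
    (∀ i, (f i).card = j ∧ FreelyContains M (f i)) ∧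
    (∀ X : Finset S, X.card = j → FreelyContains M X → ∃ i, X = f i)

/-! A line through a point of `X = S \ Z` meets the subspace `Z` in at most one point, hence
meets `X` at least twice. At `p ∈ X` the `n - 1` lines through `p` cut the `n - 1` points of
`X \ {p}` into disjoint nonempty pieces, so every piece is a single point: any two points of `X`
span a side. There are thus `C(n,2)` sides, and `C(n,2) + C(n,3) = C(n+1,3)` leaves room only for
the lines of `G` besides them. Finally a point of `Z` lies on `n - 2` lines of `G` out of its
`n - 1` lines, so on at most one side. -/

theorem Finset.exists_eq_singleton_of_pairwiseDisjoint {ι α : Type*} [DecidableEq α]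
    {s : Finset ι} {f : ι → Finset α} {Y : Finset α} (hdisj : (s : Set ι).PairwiseDisjoint f)
    (hsub : ∀ i ∈ s, f i ⊆ Y) (hne : ∀ i ∈ s, (f i).Nonempty) (hY : #Y ≤ #s) :
    ∀ y ∈ Y, ∃ i ∈ s, f i = {y} := by
  have hcover : s.biUnion f ⊆ Y := biUnion_subset.2 hsub
  have hsum : ∑ i ∈ s, #(f i) ≤ ∑ _i ∈ s, 1 := by
    rw [← card_biUnion hdisj, ← card_eq_sum_ones s]
    exact (card_le_card hcover).trans hY
  have hone : ∀ i ∈ s, #(f i) = 1 := by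
    have hpos : ∀ i ∈ s, 1 ≤ #(f i) := fun i hi => (hne i hi).card_pos
    exact fun i hi => ((sum_eq_sum_iff_of_le hpos).1 (le_antisymm (sum_le_sum hpos) hsum) i hi).symm
  have hcover_eq : s.biUnion f = Y := by
    refine eq_of_subset_of_card_le hcover (hY.trans ?_)
    rw [card_biUnion hdisj, sum_congr rfl hone, ← card_eq_sum_ones]
  intro y hy
  obtain ⟨i, hi, hyi⟩ := mem_biUnion.1 (hcover_eq ▸ hy)
  obtain ⟨z, hz⟩ := card_eq_one.1 (hone i hi)
  rw [hz, mem_singleton] at hyi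
  exact ⟨i, hi, hyi ▸ hz⟩

namespace PSTS

variable {S : Type} [DecidableEq S] (M : PSTS S)

theorem eq_of_two_le_card_inter {L₁ L₂ : Finset S} (h₁ : L₁ ∈ M.lines) (h₂ : L₂ ∈ M.lines)
    (h : 2 ≤ #(L₁ ∩ L₂)) : L₁ = L₂ := by
  obtain ⟨a, ha, b, hb, hab⟩ := one_lt_card.1 h
  rw [mem_inter] at ha hb
  exact M.unique L₁ h₁ L₂ h₂ a b hab ha.1 hb.1 ha.2 hb.2

theorem pairwiseDisjoint_inter {p : S} {Y : Finset S} (hp : p ∉ Y) :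
    (↑(M.lines.filter (p ∈ ·)) : Set (Finset S)).PairwiseDisjoint (· ∩ Y) := by
  intro L₁ h₁ L₂ h₂ hne
  rw [mem_coe, mem_filter] at h₁ h₂
  refine disjoint_left.2 fun q hq₁ hq₂ => hne ?_
  rw [mem_inter] at hq₁ hq₂
  exact M.unique L₁ h₁.1 L₂ h₂.1 p q (ne_of_mem_of_not_mem hq₁.2 hp).symm h₁.2 hq₁.1 h₂.2 hq₂.1

theorem exists_line_inter_card_eq_two {X : Finset S} {p b : S} (hp : p ∈ X) (hb : b ∈ X)
    (hpb : p ≠ b) (hmeet : ∀ L ∈ M.lines, p ∈ L → 2 ≤ #(L ∩ X))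
    (hrank : #X - 1 ≤ pointRank M p) :
    ∃ L ∈ M.lines, p ∈ L ∧ b ∈ L ∧ #(L ∩ X) = 2 := by
  have hpL : ∀ L, p ∈ L → #(L ∩ X.erase p) + 1 = #(L ∩ X) := fun L hL => by
    rw [inter_erase, card_erase_add_one (mem_inter.2 ⟨hL, hp⟩)]
  have hnonempty : ∀ L ∈ M.lines.filter (p ∈ ·), (L ∩ X.erase p).Nonempty := fun L hL => by
    rw [mem_filter] at hL
    have h2 := hmeet L hL.1 hL.2
    have h1 := hpL L hL.2
    exact card_pos.1 (by omega)
  have hpieces := exists_eq_singleton_of_pairwiseDisjoint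
    (M.pairwiseDisjoint_inter (notMem_erase p X)) (fun L _ => inter_subset_right) hnonempty
    (by rw [card_erase_of_mem hp]; exact hrank)
  obtain ⟨L, hL, hLb⟩ := hpieces b (mem_erase.2 ⟨hpb.symm, hb⟩)
  rw [mem_filter] at hL
  have hb' : b ∈ L ∩ X.erase p := hLb ▸ mem_singleton_self b
  refine ⟨L, hL.1, hL.2, (mem_inter.1 hb').1, ?_⟩
  rw [← hpL L hL.2, hLb, card_singleton]

theorem card_filter_isSide {X : Finset S}
    (hjoin : ∀ a ∈ X, ∀ b ∈ X, a ≠ b → ∃ L ∈ M.lines, a ∈ L ∧ b ∈ L ∧ #(L ∩ X) = 2) :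
    #(M.lines.filter (IsSide M X ·)) = (#X).choose 2 := by
  rw [← card_powersetCard]
  refine card_nbij (· ∩ X) (fun L hL => ?_) (fun L₁ h₁ L₂ h₂ h => ?_) (fun e he => ?_)
  · exact mem_powersetCard.2 ⟨inter_subset_right, (mem_filter.1 hL).2.2⟩
  · rw [mem_coe, mem_filter] at h₁ h₂
    replace h : L₁ ∩ X = L₂ ∩ X := h
    refine M.eq_of_two_le_card_inter h₁.1 h₂.1 ?_
    calc 2 = #(L₁ ∩ X) := h₁.2.2.symm
      _ ≤ #(L₁ ∩ L₂) :=
        card_le_card (subset_inter inter_subset_left (h.trans_subset inter_subset_left))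
  · obtain ⟨heX, he2⟩ := mem_powersetCard.1 he
    obtain ⟨a, b, hab, rfl⟩ := card_eq_two.1 he2
    have ha : a ∈ X := heX (by simp)
    have hb : b ∈ X := heX (by simp)
    obtain ⟨L, hL, haL, hbL, h2⟩ := hjoin a ha b hb hab
    refine ⟨L, mem_filter.2 ⟨hL, hL, h2⟩, ?_⟩
    have hsub : {a, b} ⊆ L ∩ X :=
      insert_subset (mem_inter.2 ⟨haL, ha⟩) (singleton_subset_iff.2 (mem_inter.2 ⟨hbL, hb⟩))
    exact (eq_of_subset_of_card_le hsub (by rw [h2, he2])).symm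

def IsSubspace (Z : Finset S) : Prop :=
  ∀ L ∈ M.lines, 2 ≤ #(L ∩ Z) → L ⊆ Z

variable {M} in
theorem IsSubspace.two_le_card_inter_compl [Fintype S] {Z L : Finset S} {p : S}
    (hZ : M.IsSubspace Z) (hL : L ∈ M.lines) (hpL : p ∈ L) (hpZ : p ∉ Z) : 2 ≤ #(L ∩ Zᶜ) := by
  have h3 := M.card3 L hL
  have hsplit := card_sdiff_add_card_inter L Z
  rw [← sdiff_eq_inter_compl]
  by_contra h
  exact hpZ (hZ L hL (by omega) hpL)

end PSTS

namespace RegularBinomialSub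

variable {n : ℕ} {S : Type} [DecidableEq S] {M : PSTS S} {Z : Finset S} {G : Finset (Finset S)}

theorem subset_of_mem (hreg : RegularBinomialSub M Z G n) {L : Finset S} (hL : L ∈ G) : L ⊆ Z :=
  hreg.2.1 L hL

theorem isSubspace (hreg : RegularBinomialSub M Z G n) : M.IsSubspace Z :=
  fun L hL h => hreg.subset_of_mem (hreg.2.2.1 L hL h)

variable [Fintype S]

theorem card_compl (hreg : RegularBinomialSub M Z G n) (hM : IsBinomial M (n + 1)) :
    #Zᶜ = n := by
  obtain ⟨-, -, -, hZ, -, -⟩ := hreg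
  have hpascal : (n + 1).choose 2 = n.choose 1 + n.choose 2 := Nat.choose_succ_succ n 1
  rw [Finset.card_compl, hM.1, hZ, hpascal, Nat.choose_one_right]
  omega

theorem exists_side (hreg : RegularBinomialSub M Z G n) (hM : IsBinomial M (n + 1)) :
    ∀ a ∈ Zᶜ, ∀ b ∈ Zᶜ, a ≠ b → ∃ L ∈ M.lines, a ∈ L ∧ b ∈ L ∧ #(L ∩ Zᶜ) = 2 :=
  fun a ha b hb hab => M.exists_line_inter_card_eq_two ha hb hab
    (fun _ hL haL => hreg.isSubspace.two_le_card_inter_compl hL haL (mem_compl.1 ha))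
    (by rw [hreg.card_compl hM, hM.2.2 a]; omega)

theorem filter_not_isSide (hreg : RegularBinomialSub M Z G n) (hM : IsBinomial M (n + 1)) :
    M.lines.filter (fun L => ¬ IsSide M Zᶜ L) = G := by
  have hG : G ⊆ M.lines.filter (fun L => ¬ IsSide M Zᶜ L) := fun L hL => by
    have hempty : L ∩ Zᶜ = ∅ := by
      rw [← sdiff_eq_inter_compl, sdiff_eq_empty_iff_subset]
      exact hreg.subset_of_mem hL
    exact mem_filter.2 ⟨hreg.1 hL, fun h => by simpa [hempty] using h.2⟩
  have hsides := M.card_filter_isSide (hreg.exists_side hM)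
  have hsplit := card_filter_add_card_filter_not (s := M.lines) (fun L => IsSide M Zᶜ L)
  have hpascal : (n + 1).choose 3 = n.choose 2 + n.choose 3 := Nat.choose_succ_succ n 2
  rw [hreg.card_compl hM] at hsides
  rw [hM.2.1] at hsplit
  refine (eq_of_subset_of_card_le hG ?_).symm
  obtain ⟨-, -, -, -, hG, -⟩ := hreg
  rw [hG]
  omega

theorem mem_compl_of_isSide (hreg : RegularBinomialSub M Z G n) (hM : IsBinomial M (n + 1))
    {L₁ L₂ : Finset S} (h₁ : IsSide M Zᶜ L₁) (h₂ : IsSide M Zᶜ L₂) (hne : L₁ ≠ L₂) {p : S}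
    (hp₁ : p ∈ L₁) (hp₂ : p ∈ L₂) : p ∈ Zᶜ := by
  by_contra hp
  rw [mem_compl, not_not] at hp
  set T := M.lines.filter (p ∈ ·)
  have hsplit := card_filter_add_card_filter_not (s := T) (IsSide M Zᶜ)
  have hnonsides : T.filter (fun L => ¬ IsSide M Zᶜ L) = G.filter (p ∈ ·) := by
    rw [filter_comm, hreg.filter_not_isSide hM]
  have hsides : 1 < #(T.filter (IsSide M Zᶜ)) :=
    one_lt_card.2 ⟨L₁, mem_filter.2 ⟨mem_filter.2 ⟨h₁.1, hp₁⟩, h₁⟩,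
      L₂, mem_filter.2 ⟨mem_filter.2 ⟨h₂.1, hp₂⟩, h₂⟩, hne⟩
  have hrank : #T = n + 1 - 2 := hM.2.2 p
  obtain ⟨-, -, -, -, -, hGrank⟩ := hreg
  rw [hnonsides, hGrank p hp] at hsplit
  omega

end RegularBinomialSub

/-- If a B(n)-configuration (Z,G) is regularly contained in a
binomial B(n+1)-configuration M, then X = S∖Z has exactly n points, any two of
them are collinear via a line not in G, these lines make X into a complete
K_n-graph freely contained in M, and the complement of K_X is (Z,G). -/
theorem stmt_3 (n : ℕ) (S : Type) [Fintype S] [DecidableEq S] (M : PSTS S)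
    (hM : IsBinomial M (n + 1)) (Z : Finset S) (G : Finset (Finset S))
    (hreg : RegularBinomialSub M Z G n)
    (X : Finset S) (hX : X = Finset.univ \ Z) :
    X.card = n ∧
    (∀ a ∈ X, ∀ b ∈ X, a ≠ b → ∃ L ∈ M.lines, L ∉ G ∧ a ∈ L ∧ b ∈ L) ∧
    FreelyContains M X ∧
    M.lines.filter (fun L => ¬ IsSide M X L) = G := by
  rw [hX, ← compl_eq_univ_sdiff]
  refine ⟨hreg.card_compl hM, fun a ha b hb hab => ?_,
    ⟨hreg.exists_side hM, fun _ _ h₁ h₂ hne _ => hreg.mem_compl_of_isSide hM h₁ h₂ hne⟩,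
    hreg.filter_not_isSide hM⟩
  obtain ⟨L, hL, haL, hbL, -⟩ := hreg.exists_side hM a ha b hb hab
  exact ⟨L, hL, fun hLG => mem_compl.1 ha (hreg.subset_of_mem hLG haL), haL, hbL⟩
end

section
/- A binomial B(n+1)-configuration M freely contains a complete graph K_n if and only if M regularly contains a B(n)-subconfiguration as a subspace. -/
/-! The vertex set `X` of a complete graph and the point set `Z` of a subspace are complementary,
with `#X = n` and `#Z = C(n,2)`. Call a line meeting `X` in exactly two points a side of `X`;
sides are determined by their trace on `X`, so there are at most `C(n,2)` of them, with equality
exactly when every edge of `K_X` extends to a line.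

If `K_X` is freely contained, double counting vertex-side incidences shows that each vertex lies
on `n - 1` sides, i.e. on nothing but sides; so the remaining `C(n+1,3) - C(n,2) = C(n,3)` lines
lie in `Z`. The `C(n,2)` sides meet `Z` in pairwise distinct single points, so every point of `Z`
is on exactly one side and on `n - 2` lines inside `Z`.

Conversely, if `(Z,G)` is a regular `B(n)`-subspace, every point of `Z` lies on exactly one of the
`C(n,2)` lines outside `G`, and by regularity each of these meets `Z` at most once. Counting
incidences, each meets `Z` exactly once, hence is a side of `Zᶜ`, and these are all the sides. -/

open Finset

namespace Finset

variable {α : Type*} [DecidableEq α]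

theorem sum_card_inter_eq_sum_card_filter_mem (s : Finset α) (B : Finset (Finset α)) :
    ∑ t ∈ B, #(t ∩ s) = ∑ a ∈ s, #{t ∈ B | a ∈ t} := by
  simp_rw [inter_comm _ s, ← filter_mem_eq_inter, card_eq_sum_ones, sum_filter]
  exact sum_comm

theorem eq_of_forall_le_of_sum_eq_card_mul {ι : Type*} {s : Finset ι} {f : ι → ℕ} {c : ℕ}
    (hle : ∀ i ∈ s, f i ≤ c) (hsum : ∑ i ∈ s, f i = #s * c) : ∀ i ∈ s, f i = c := by
  rw [← smul_eq_mul, ← sum_const] at hsum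
  exact (sum_eq_sum_iff_of_le hle).mp hsum

end Finset

namespace PSTS

variable {S : Type} [DecidableEq S] (M : PSTS S) {X L L₁ L₂ : Finset S}

def sides (X : Finset S) : Finset (Finset S) := {L ∈ M.lines | #(L ∩ X) = 2}

theorem sides_subset : M.sides X ⊆ M.lines := filter_subset _ _

theorem eq_of_inter_eq (h₁ : L₁ ∈ M.lines) (h₂ : L₂ ∈ M.lines) (hc : #(L₁ ∩ X) = 2)
    (heq : L₁ ∩ X = L₂ ∩ X) : L₁ = L₂ := by
  have mem : ∀ x ∈ L₁ ∩ X, x ∈ L₁ ∧ x ∈ L₂ :=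
    fun x hx => ⟨(mem_inter.1 hx).1, (mem_inter.1 (heq ▸ hx)).1⟩
  obtain ⟨a, b, hab, hL₁⟩ := card_eq_two.mp hc
  obtain ⟨ha₁, ha₂⟩ := mem a (by simp [hL₁])
  obtain ⟨hb₁, hb₂⟩ := mem b (by simp [hL₁])
  exact M.unique L₁ h₁ L₂ h₂ a b hab ha₁ hb₁ ha₂ hb₂

theorem injOn_inter_sides : Set.InjOn (· ∩ X) (M.sides X) := fun _ h₁ _ h₂ =>
  M.eq_of_inter_eq (mem_filter.1 h₁).1 (mem_filter.1 h₂).1 (mem_filter.1 h₁).2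

theorem image_inter_sides_subset : (M.sides X).image (· ∩ X) ⊆ X.powersetCard 2 := by
  simp only [subset_iff, mem_image, mem_powersetCard]
  rintro _ ⟨L, hL, rfl⟩
  exact ⟨inter_subset_right, (mem_filter.1 hL).2⟩

theorem card_sides_le : #(M.sides X) ≤ (#X).choose 2 := by
  rw [← card_powersetCard, ← card_image_of_injOn M.injOn_inter_sides]
  exact card_le_card M.image_inter_sides_subset

theorem card_sides_eq_iff :
    (∀ a ∈ X, ∀ b ∈ X, a ≠ b → ∃ L ∈ M.lines, a ∈ L ∧ b ∈ L ∧ #(L ∩ X) = 2) ↔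
      #(M.sides X) = (#X).choose 2 := by
  rw [← card_powersetCard, ← card_image_of_injOn M.injOn_inter_sides]
  refine ⟨fun h => ?_, fun h a ha b hb hab => ?_⟩
  · refine congrArg card (Subset.antisymm M.image_inter_sides_subset fun E hE => ?_)
    obtain ⟨hEX, hE⟩ := mem_powersetCard.1 hE
    obtain ⟨a, b, hab, rfl⟩ := card_eq_two.1 hE
    obtain ⟨L, hL, haL, hbL, hLX⟩ := h a (hEX (by simp)) b (hEX (by simp)) hab
    refine mem_image.2 ⟨L, mem_filter.2 ⟨hL, hLX⟩, (eq_of_subset_of_card_le ?_ ?_).symm⟩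
    · simp [insert_subset_iff, haL, hbL, hEX (by simp : a ∈ _), hEX (by simp : b ∈ _)]
    · rw [hLX, card_pair hab]
  · have hE : {a, b} ∈ (M.sides X).image (· ∩ X) := by
      rw [eq_of_subset_of_card_le M.image_inter_sides_subset h.ge]
      exact mem_powersetCard.2 ⟨by simp [insert_subset_iff, ha, hb], card_pair hab⟩
    obtain ⟨L, hL, hLX⟩ := mem_image.1 hE
    have hmem : ∀ x, x ∈ ({a, b} : Finset S) → x ∈ L := fun x hx => (mem_inter.1 (hLX ▸ hx)).1
    exact ⟨L, (mem_filter.1 hL).1, hmem a (by simp), hmem b (by simp), by rw [hLX, card_pair hab]⟩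

theorem freelyContains_iff : FreelyContains M X ↔
    #(M.sides X) = (#X).choose 2 ∧ ∀ p ∉ X, #{L ∈ M.sides X | p ∈ L} ≤ 1 := by
  rw [FreelyContains, card_sides_eq_iff]
  refine and_congr_right fun _ => ⟨fun h p hp => ?_, fun h L₁ L₂ h₁ h₂ hne p hp₁ hp₂ => ?_⟩
  · refine card_le_one.2 fun L₁ hL₁ L₂ hL₂ => by_contra fun hne => hp ?_
    rw [mem_filter] at hL₁ hL₂
    exact h L₁ L₂ (mem_filter.1 hL₁.1) (mem_filter.1 hL₂.1) hne p hL₁.2 hL₂.2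
  · by_contra hp
    exact hne (card_le_one.1 (h p hp) L₁ (mem_filter.2 ⟨mem_filter.2 h₁, hp₁⟩)
      L₂ (mem_filter.2 ⟨mem_filter.2 h₂, hp₂⟩))

theorem card_filter_mem_lines_sdiff {A : Finset (Finset S)} (hA : A ⊆ M.lines) (p : S) :
    #{L ∈ M.lines \ A | p ∈ L} = pointRank M p - #{L ∈ A | p ∈ L} := by
  rw [pointRank, ← card_sdiff_of_subset (filter_subset_filter _ hA)]
  congr 1
  ext L
  simp only [mem_filter, mem_sdiff]
  tauto

theorem sum_card_filter_mem_sides : ∑ a ∈ X, #{L ∈ M.sides X | a ∈ L} = #(M.sides X) * 2 := by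
  rw [← sum_card_inter_eq_sum_card_filter_mem]
  exact sum_const_nat fun L hL => (mem_filter.1 hL).2

theorem mem_sides_of_mem (hrank : ∀ a ∈ X, pointRank M a ≤ #X - 1)
    (hcard : #(M.sides X) = (#X).choose 2) {a : S} (ha : a ∈ X) (hL : L ∈ M.lines)
    (haL : a ∈ L) : L ∈ M.sides X := by
  have hle : ∀ b ∈ X, #{L ∈ M.sides X | b ∈ L} ≤ #X - 1 := fun b hb =>
    (card_le_card (filter_subset_filter _ M.sides_subset)).trans (hrank b hb)
  have hsum : ∑ b ∈ X, #{L ∈ M.sides X | b ∈ L} = #X * (#X - 1) := by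
    rw [M.sum_card_filter_mem_sides, hcard, Nat.choose_two_right,
      Nat.div_mul_cancel (Nat.even_mul_pred_self _).two_dvd]
  have heq : {L ∈ M.sides X | a ∈ L} = {L ∈ M.lines | a ∈ L} :=
    eq_of_subset_of_card_le (filter_subset_filter _ M.sides_subset)
      ((hrank a ha).trans (eq_of_forall_le_of_sum_eq_card_mul hle hsum a ha).ge)
  have hLa : L ∈ {L ∈ M.sides X | a ∈ L} := heq ▸ mem_filter.2 ⟨hL, haL⟩
  exact (mem_filter.1 hLa).1

section Binomial

variable [Fintype S] {n : ℕ}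

theorem card_inter_compl_of_mem_sides (hL : L ∈ M.sides X) : #(L ∩ Xᶜ) = 1 := by
  have hsplit := card_inter_add_card_sdiff L X
  rw [sdiff_eq_inter_compl, M.card3 L (mem_filter.1 hL).1, (mem_filter.1 hL).2] at hsplit
  omega

theorem regularBinomialSub_of_freelyContains (hM : IsBinomial M (n + 1)) (hX : #X = n)
    (hF : FreelyContains M X) : RegularBinomialSub M Xᶜ (M.lines \ M.sides X) n := by
  obtain ⟨hS, hlines, hrank⟩ := hM
  obtain ⟨hsides, hfree⟩ := M.freelyContains_iff.1 hF
  have hc2 : (n + 1).choose 2 = n + n.choose 2 := by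
    rw [Nat.choose_succ_succ, Nat.choose_one_right]
  have hc3 : (n + 1).choose 3 = n.choose 2 + n.choose 3 := Nat.choose_succ_succ n 2
  have hXc : #Xᶜ = n.choose 2 := by rw [card_compl, hS, hX]; omega
  have hnonside : ∀ L ∈ M.lines \ M.sides X, L ⊆ Xᶜ := fun L hL x hxL => mem_compl.2 fun hx =>
    (mem_sdiff.1 hL).2 (M.mem_sides_of_mem (fun a _ => by rw [hrank, hX]; omega) hsides hx
      (mem_sdiff.1 hL).1 hxL)
  have hone : ∀ p ∈ Xᶜ, #{L ∈ M.sides X | p ∈ L} = 1 := by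
    refine eq_of_forall_le_of_sum_eq_card_mul (fun p hp => hfree p (mem_compl.1 hp)) ?_
    rw [← sum_card_inter_eq_sum_card_filter_mem,
      sum_congr rfl fun L hL => M.card_inter_compl_of_mem_sides hL, sum_const, smul_eq_mul,
      hsides, hXc, hX]
  refine ⟨sdiff_subset, hnonside, fun L hL h2 => mem_sdiff.2 ⟨hL, fun hs => ?_⟩, hXc, ?_,
    fun p hp => ?_⟩
  · have := M.card_inter_compl_of_mem_sides hs
    omega
  · rw [card_sdiff_of_subset M.sides_subset, hlines, hsides, hX]
    omega
  · rw [M.card_filter_mem_lines_sdiff M.sides_subset, hrank, hone p hp]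
    omega

theorem freelyContains_compl_of_regularBinomialSub {Z : Finset S} {G : Finset (Finset S)}
    (hM : IsBinomial M (n + 1)) (hR : RegularBinomialSub M Z G n) :
    #Zᶜ = n ∧ FreelyContains M Zᶜ := by
  obtain ⟨hS, hlines, hrank⟩ := hM
  obtain ⟨hGsub, -, hreg, hZ, hG, hrankG⟩ := hR
  have hc2 : (n + 1).choose 2 = n + n.choose 2 := by
    rw [Nat.choose_succ_succ, Nat.choose_one_right]
  have hc3 : (n + 1).choose 3 = n.choose 2 + n.choose 3 := Nat.choose_succ_succ n 2
  have hXc : #Zᶜ = n := by rw [card_compl, hS, hZ]; omega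
  have hnonG : #(M.lines \ G) = n.choose 2 := by
    rw [card_sdiff_of_subset hGsub, hlines, hG]
    omega
  have hone : ∀ p ∈ Z, #{L ∈ M.lines \ G | p ∈ L} = 1 := by
    intro p hp
    have hn : 2 ≤ n := by
      by_contra h
      rw [Nat.choose_eq_zero_of_lt (by omega)] at hZ
      exact absurd (card_pos.2 ⟨p, hp⟩) (by omega)
    rw [M.card_filter_mem_lines_sdiff hGsub, hrank, hrankG p hp]
    omega
  have hmeet : ∀ L ∈ M.lines \ G, #(L ∩ Z) = 1 := by
    refine eq_of_forall_le_of_sum_eq_card_mul (fun L hL => ?_) ?_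
    · by_contra h
      exact (mem_sdiff.1 hL).2 (hreg L (mem_sdiff.1 hL).1 (by omega))
    · rw [sum_card_inter_eq_sum_card_filter_mem, sum_congr rfl hone, sum_const, smul_eq_mul, hZ,
        hnonG]
  have hsides : M.lines \ G = M.sides Zᶜ := by
    refine eq_of_subset_of_card_le (fun L hL => mem_filter.2 ⟨(mem_sdiff.1 hL).1, ?_⟩) ?_
    · have hsplit := card_inter_add_card_sdiff L Z
      rw [sdiff_eq_inter_compl, M.card3 L (mem_sdiff.1 hL).1, hmeet L hL] at hsplit
      omega
    · rw [hnonG, ← hXc]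
      exact M.card_sides_le
  refine ⟨hXc, M.freelyContains_iff.2 ⟨?_, fun p hp => ?_⟩⟩
  · rw [← hsides, hnonG, hXc]
  · rw [← hsides, hone p (by simpa using hp)]

end Binomial

end PSTS

/-- A binomial B(n+1)-configuration freely contains a complete
graph K_n iff it regularly contains a B(n)-subconfiguration as a subspace. -/
theorem stmt_4 (n : ℕ) (S : Type) [Fintype S] [DecidableEq S] (M : PSTS S)
    (hM : IsBinomial M (n + 1)) :
    (∃ X : Finset S, X.card = n ∧ FreelyContains M X) ↔
    (∃ Z : Finset S, ∃ G : Finset (Finset S), RegularBinomialSub M Z G n) := by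
  constructor
  · rintro ⟨X, hX, hF⟩
    exact ⟨Xᶜ, _, M.regularBinomialSub_of_freelyContains hM hX hF⟩
  · rintro ⟨Z, G, hR⟩
    exact ⟨Zᶜ, M.freelyContains_compl_of_regularBinomialSub hM hR⟩
end
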